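/- arXiv:2511.06258 — 5 statements merged into one kernel-verified Lean document; each statement's English description precedes it below -/
import Mathlib

section
/- For all natural numbers p, q, r, the multiplicity E_{p,q}^r satisfies the closed formula: E_{p,q}^r = 0 if p + q < r or r < |p - q|; E_{p,q}^r = ⌊(r - |p - q|)/2⌋ + 1 if |p - q| ≤ r and 2r ≤ p + q + |p - q|; and E_{p,q}^r = ⌊(p + q - r)/2⌋ + 1 if p + q + |p - q| < 2r and r ≤ p + q. -/
/-!
Eliminating `T`, `L` and `R`, a solution of (E1) is determined by `U`, which can be any natural
number with `max (p - r) (q - r) ≤ U` and `2 U ≤ p + q - r`. So `E_{p,q}^r` is the number of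
integers in that interval; the three cases of the formula are the interval being empty, its
lower bound `max p q - r` being positive, and its lower bound being `0`.
-/

/-- The multiplicity `E_{p,q}^r`: the number of non-negative integer solutions
    (T, U, L, R) of the Diophantine system (E1):
    T + L + R = r, L + T + U = p, R + U + T = q. -/
noncomputable def Emult (p q r : ℕ) : ℕ :=
  Set.ncard {t : ℕ × ℕ × ℕ × ℕ |
    t.1 + t.2.2.1 + t.2.2.2 = r ∧
    t.2.2.1 + t.1 + t.2.1 = p ∧
    t.2.2.2 + t.2.1 + t.1 = q}

lemma emult_eq_ncard_U (p q r : ℕ) :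
    Emult p q r = {U : ℕ | p ≤ U + r ∧ q ≤ U + r ∧ 2 * U + r ≤ p + q}.ncard := by
  have hsol : {t : ℕ × ℕ × ℕ × ℕ |
      t.1 + t.2.2.1 + t.2.2.2 = r ∧ t.2.2.1 + t.1 + t.2.1 = p ∧ t.2.2.2 + t.2.1 + t.1 = q} =
      (fun U => (p + q - r - 2 * U, U, U + r - q, U + r - p)) ''
        {U : ℕ | p ≤ U + r ∧ q ≤ U + r ∧ 2 * U + r ≤ p + q} := by
    ext ⟨T, U, L, R⟩
    simp only [Set.mem_ofPred_eq, Set.mem_image, Prod.mk.injEq]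
    constructor
    · rintro ⟨hr, hp, hq⟩
      exact ⟨U, ⟨by omega, by omega, by omega⟩, by omega, rfl, by omega, by omega⟩
    · rintro ⟨U, ⟨hp, hq, hr⟩, rfl, rfl, rfl, rfl⟩
      omega
  have hinj : Function.Injective fun U : ℕ => (p + q - r - 2 * U, U, U + r - q, U + r - p) :=
    fun a b hab => congrArg (fun t : ℕ × ℕ × ℕ × ℕ => t.2.1) hab
  rw [Emult, hsol, Set.ncard_image_of_injective _ hinj]

lemma emult_eq_zero_of_lt (p q r : ℕ) (h : p + q < r) : Emult p q r = 0 := by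
  have hempty : {U : ℕ | p ≤ U + r ∧ q ≤ U + r ∧ 2 * U + r ≤ p + q} = ∅ :=
    Set.eq_empty_of_forall_notMem fun U ⟨_, _, hU⟩ => by omega
  rw [emult_eq_ncard_U, hempty, Set.ncard_empty]

lemma emult_eq_of_le (p q r : ℕ) (h : r ≤ p + q) :
    Emult p q r = (p + q - r) / 2 + 1 - max (p - r) (q - r) := by
  have hIcc : {U : ℕ | p ≤ U + r ∧ q ≤ U + r ∧ 2 * U + r ≤ p + q} =
      ↑(Finset.Icc (max (p - r) (q - r)) ((p + q - r) / 2)) := by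
    ext U
    simp only [Set.mem_ofPred_eq, Finset.coe_Icc, Set.mem_Icc, max_le_iff]
    omega
  rw [emult_eq_ncard_U, hIcc, Set.ncard_coe_finset, Nat.card_Icc]

/-- the closed formula for `E_{p,q}^r`. -/
theorem stmt_3 (p q r : ℕ) :
    (p + q < r ∨ r < ((p : ℤ) - (q : ℤ)).natAbs → Emult p q r = 0) ∧
    (((p : ℤ) - (q : ℤ)).natAbs ≤ r ∧ 2 * r ≤ p + q + ((p : ℤ) - (q : ℤ)).natAbs →
      Emult p q r = (r - ((p : ℤ) - (q : ℤ)).natAbs) / 2 + 1) ∧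
    (p + q + ((p : ℤ) - (q : ℤ)).natAbs < 2 * r ∧ r ≤ p + q →
      Emult p q r = (p + q - r) / 2 + 1) := by
  rcases lt_or_ge (p + q) r with h | h
  · rw [emult_eq_zero_of_lt p q r h]
    omega
  · rw [emult_eq_of_le p q r h]
    omega
end

section
/- For all natural numbers p, q, r, the multiplicity E_{p,q}^r is positive (i.e., the system (E1) has at least one non-negative integer solution) if and only if |p - q| ≤ r ≤ p + q, that is, if and only if p, q, r can be the side lengths of a (possibly degenerate) triangle. -/
theorem Emult_pos_iff (p q r : ℕ) :
    0 < Emult p q r ↔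
      ∃ T U L R : ℕ, T + L + R = r ∧ L + T + U = p ∧ R + U + T = q := by
  have hfin : {t : ℕ × ℕ × ℕ × ℕ |
      t.1 + t.2.2.1 + t.2.2.2 = r ∧ t.2.2.1 + t.1 + t.2.1 = p ∧
        t.2.2.2 + t.2.1 + t.1 = q}.Finite := by
    refine (Set.finite_Iic (r, p, r, r)).subset ?_
    rintro ⟨T, U, L, R⟩ ⟨hr, hp, -⟩
    simp only [Set.mem_Iic, Prod.mk_le_mk] at hr hp ⊢
    omega
  rw [Emult, Set.ncard_pos hfin]
  constructor
  · rintro ⟨⟨T, U, L, R⟩, h⟩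
    exact ⟨T, U, L, R, h⟩
  · rintro ⟨T, U, L, R, h⟩
    exact ⟨⟨T, U, L, R⟩, h⟩

theorem exists_E1_solution_iff (p q r : ℕ) :
    (∃ T U L R : ℕ, T + L + R = r ∧ L + T + U = p ∧ R + U + T = q) ↔
      p ≤ q + r ∧ q ≤ p + r ∧ r ≤ p + q := by
  constructor
  · rintro ⟨T, U, L, R, hr, hp, hq⟩
    omega
  · rintro ⟨hpq, hqp, hr⟩
    set u := max p q - r
    exact ⟨p + q - r - 2 * u, u, u + r - q, u + r - p, by omega, by omega, by omega⟩

/-- `E_{p,q}^r > 0` iff `|p - q| ≤ r ≤ p + q`. -/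
theorem stmt_4 (p q r : ℕ) :
    0 < Emult p q r ↔ (|(p : ℤ) - (q : ℤ)| ≤ (r : ℤ) ∧ (r : ℤ) ≤ (p : ℤ) + (q : ℤ)) := by
  rw [Emult_pos_iff, exists_E1_solution_iff, abs_le]
  omega
end

section
/- For all natural numbers p, q, r, if r = p + q or r = |p - q|, then E_{p,q}^r = 1; that is, when the triangle with sides p, q, r is degenerate, the system (E1) has exactly one non-negative integer solution. -/
/-! The degenerate triangles `r = p + q` and `r = |p - q|` are permutations of one another
under the `S₃`-symmetry of `E_{p,q}^r`, and for `r = p + q` the system forces `T = U = 0`,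
leaving the single solution `(0, 0, p, q)`. -/

theorem Emult_comm (p q r : ℕ) : Emult p q r = Emult q p r := by
  unfold Emult
  exact Set.ncard_congr (fun t _ => (t.1, t.2.1, t.2.2.2, t.2.2.1))
    (fun _ ht => by simp only [Set.mem_ofPred_eq] at ht ⊢; omega)
    (fun _ _ _ _ h => by simp only [Prod.ext_iff] at h ⊢; omega)
    (fun t _ => ⟨(t.1, t.2.1, t.2.2.2, t.2.2.1), by simp only [Set.mem_ofPred_eq] at *; omega,
      rfl⟩)

theorem Emult_swap_left (p q r : ℕ) : Emult p q r = Emult r q p := by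
  unfold Emult
  exact Set.ncard_congr (fun t _ => (t.1, t.2.2.2, t.2.2.1, t.2.1))
    (fun _ ht => by simp only [Set.mem_ofPred_eq] at ht ⊢; omega)
    (fun _ _ _ _ h => by simp only [Prod.ext_iff] at h ⊢; omega)
    (fun t _ => ⟨(t.1, t.2.2.2, t.2.2.1, t.2.1), by simp only [Set.mem_ofPred_eq] at *; omega,
      rfl⟩)

theorem Emult_add (p q : ℕ) : Emult p q (p + q) = 1 := by
  rw [Emult, Set.ncard_eq_one]
  refine ⟨(0, 0, p, q), ?_⟩
  ext ⟨T, U, L, R⟩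
  simp only [Set.mem_ofPred_eq, Set.mem_singleton_iff, Prod.ext_iff]
  omega

theorem eq_add_or_eq_add_of_natCast_eq_abs_sub {p q r : ℕ}
    (h : (r : ℤ) = |(p : ℤ) - (q : ℤ)|) : p = r + q ∨ q = p + r := by
  rcases abs_cases ((p : ℤ) - (q : ℤ)) with ⟨hpq, _⟩ | ⟨hpq, _⟩ <;> omega

/-- if `r = p + q` or `r = |p - q|` then `E_{p,q}^r = 1`. -/
theorem stmt_5 (p q r : ℕ) (h : r = p + q ∨ (r : ℤ) = |(p : ℤ) - (q : ℤ)|) :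
    Emult p q r = 1 := by
  rcases h with rfl | h
  · exact Emult_add p q
  rcases eq_add_or_eq_add_of_natCast_eq_abs_sub h with rfl | rfl
  · rw [Emult_swap_left, Emult_add]
  · rw [Emult_comm, Emult_swap_left, Emult_comm, Emult_add]
end

section
/- For all natural numbers p, q, r with r ≤ p + q + |p - q|, one has the symmetry E_{p,q}^r = E_{p,q}^{p+q+|p-q|-r}; that is, the multiplicity is invariant under the reflection r ↦ p + q + |p - q| - r. -/
namespace Emult

def solutions (p q r : ℕ) : Set (ℕ × ℕ × ℕ × ℕ) :=
  {t | t.1 + t.2.2.1 + t.2.2.2 = r ∧ t.2.2.1 + t.1 + t.2.1 = p ∧ t.2.2.2 + t.2.1 + t.1 = q}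

theorem eq_ncard_solutions (p q r : ℕ) : Emult p q r = (solutions p q r).ncard := rfl

def reflect : ℕ × ℕ × ℕ × ℕ → ℕ × ℕ × ℕ × ℕ
  | (T, U, L, R) => (T, min L R, L + U - min L R, R + U - min L R)

theorem reflect_involutive : Function.Involutive reflect := by
  rintro ⟨T, U, L, R⟩
  simp only [reflect, Prod.mk.injEq, true_and]
  omega

theorem reflect_mem_solutions_iff {p q r : ℕ} (h : r ≤ p + q + ((p : ℤ) - (q : ℤ)).natAbs)
    (t : ℕ × ℕ × ℕ × ℕ) :
    reflect t ∈ solutions p q r ↔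
      t ∈ solutions p q (p + q + ((p : ℤ) - (q : ℤ)).natAbs - r) := by
  obtain ⟨T, U, L, R⟩ := t
  simp only [reflect, solutions, Set.mem_ofPred_eq]
  omega

theorem ncard_solutions_reflect {p q r : ℕ} (h : r ≤ p + q + ((p : ℤ) - (q : ℤ)).natAbs) :
    (solutions p q (p + q + ((p : ℤ) - (q : ℤ)).natAbs - r)).ncard =
      (solutions p q r).ncard := by
  have hpre : reflect ⁻¹' solutions p q r =
      solutions p q (p + q + ((p : ℤ) - (q : ℤ)).natAbs - r) :=
    Set.ext (reflect_mem_solutions_iff h)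
  rw [← hpre, ← congrFun reflect_involutive.image_eq_preimage_symm,
    Set.ncard_image_of_injective _ reflect_involutive.injective]

end Emult

/-- the symmetry `E_{p,q}^r = E_{p,q}^{p+q+|p-q|-r}`. -/
theorem stmt_7 (p q r : ℕ) (h : r ≤ p + q + ((p : ℤ) - (q : ℤ)).natAbs) :
    Emult p q r = Emult p q (p + q + ((p : ℤ) - (q : ℤ)).natAbs - r) := by
  simp only [Emult.eq_ncard_solutions, Emult.ncard_solutions_reflect h]
end

section
/- For all natural numbers p, q, r with |p - q| ≤ r ≤ p + q, the multiplicity satisfies the unified formula E_{p,q}^r = ⌊min(r - |p - q|, p + q - r)/2⌋ + 1; equivalently, E_{p,q}^r equals the integer part of the tangent length from the vertex opposite the largest side of the triangle with sides p, q, r to the incircle, plus one. -/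
namespace Emult

def solutionOfU (p q r u : ℕ) : ℕ × ℕ × ℕ × ℕ :=
  (p + q - r - 2 * u, u, u + r - q, u + r - p)

theorem solutionOfU_injective (p q r : ℕ) : Function.Injective (solutionOfU p q r) :=
  fun _ _ h => congrArg (fun t => t.2.1) h

theorem solutions_eq_image_Icc {p q r : ℕ} (h : r ≤ p + q) :
    {t : ℕ × ℕ × ℕ × ℕ |
      t.1 + t.2.2.1 + t.2.2.2 = r ∧
      t.2.2.1 + t.1 + t.2.1 = p ∧
      t.2.2.2 + t.2.1 + t.1 = q} =
      solutionOfU p q r '' Set.Icc (max (p - r) (q - r)) ((p + q - r) / 2) := by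
  ext ⟨T, U, L, R⟩
  simp only [Set.mem_ofPred_eq, Set.mem_image, Set.mem_Icc, solutionOfU, Prod.mk.injEq]
  constructor
  · rintro ⟨hr, hp, hq⟩
    exact ⟨U, ⟨by omega, by omega⟩, by omega, rfl, by omega, by omega⟩
  · rintro ⟨u, ⟨hlo, hhi⟩, rfl, rfl, rfl, rfl⟩
    omega

theorem eq_card_Icc {p q r : ℕ} (h : r ≤ p + q) :
    Emult p q r = (p + q - r) / 2 + 1 - max (p - r) (q - r) := by
  rw [Emult, solutions_eq_image_Icc h,
    Set.ncard_image_of_injective _ (solutionOfU_injective p q r), Set.ncard_Icc_nat]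

end Emult

/-- the unified formula
    `E_{p,q}^r = ⌊min(r - |p - q|, p + q - r)/2⌋ + 1` under the triangle
    inequalities. -/
theorem stmt_10 (p q r : ℕ)
    (h1 : ((p : ℤ) - (q : ℤ)).natAbs ≤ r) (h2 : r ≤ p + q) :
    Emult p q r = min (r - ((p : ℤ) - (q : ℤ)).natAbs) (p + q - r) / 2 + 1 := by
  rw [Emult.eq_card_Icc h2]
  omega
end
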